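/- Let d ≥ 2 and n ≥ 2, let K₀ be an o-symmetric convex body in ℝ^d, and let 𝒦 = {x_i + τ_i K₀ : i = 1, …, n} (with all τ_i > 0) be a non-separable family of positive homothetic copies of K₀. Then there is a translate of (∑_{i=1}^n τ_i) K₀ that covers ⋃𝒦; indeed, ⋃_{i=1}^n (x_i + τ_i K₀) ⊆ x + (∑_{i=1}^n τ_i) K₀ where x = (∑_{i=1}^n τ_i x_i)/(∑_{i=1}^n τ_i). -/

import Mathlib

open Set Metric Pointwise
open scoped RealInnerProductSpace

/-- A finite family of sets in `ℝ^d` is non-separable (an NS-family) if there is no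
hyperplane disjoint from the union strictly separating some members from all the
remaining members, i.e. there is no nonempty proper index set `I` and hyperplane
`{y | ⟪u, y⟫ = α}` with all members indexed by `I` strictly on one side and all the
others strictly on the other side. -/
def NonSeparableFamily {d n : ℕ} (F : Fin n → Set (EuclideanSpace ℝ (Fin d))) : Prop :=
  ¬ (∃ (I : Finset (Fin n)) (u : EuclideanSpace ℝ (Fin d)) (α : ℝ),
      I.Nonempty ∧ I ≠ Finset.univ ∧ u ≠ 0 ∧
      (∀ i ∈ I, ∀ y ∈ F i, ⟪u, y⟫ < α) ∧
      (∀ i ∉ I, ∀ y ∈ F i, α < ⟪u, y⟫))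

/-!
Fix a direction `u ≠ 0` and a bound `h ≥ ⟪u, z⟫` on `K₀`. By symmetry of `K₀` the projection of
`xᵢ + τᵢ K₀` onto `u` lies in the interval `[aᵢ - τᵢ h, aᵢ + τᵢ h]`, `aᵢ = ⟪u, xᵢ⟫`, and
non-separability makes the union of these intervals connected. For intervals with connected union,
the stretch between the right end `tᵢ` of one of them and any other right end `tₖ > tᵢ` is covered by
the intervals whose right end exceeds `tᵢ`, so `tₖ - tᵢ ≤ 2h ∑_{tⱼ > tᵢ} τⱼ`. Weighting by `τᵢ` and
summing over `i`, each pair `{i, j}` is counted at most once, which gives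
`tₖ ≤ (∑ τᵢ aᵢ)/(∑ τᵢ) + (∑ τᵢ) h`. As this holds for every `u` and `h`, Hahn–Banach puts every
point of `⋃ 𝒦` into `x + (∑ τᵢ) K₀`.
-/

section
open Finset

theorem sum_sq_add_two_mul_sum_ite_lt_le_sq_sum {ι : Type*} [Fintype ι] (w t : ι → ℝ)
    (hw : ∀ i, 0 ≤ w i) :
    ∑ i, w i ^ 2 + 2 * ∑ i, ∑ j, (if t i < t j then w i * w j else 0) ≤ (∑ i, w i) ^ 2 := by
  classical
  have swap : ∑ i, ∑ j, (if t i < t j then w i * w j else 0) =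
      ∑ i, ∑ j, (if t j < t i then w i * w j else 0) := by
    rw [sum_comm]
    simp_rw [mul_comm (w _) (w _)]
  calc ∑ i, w i ^ 2 + 2 * ∑ i, ∑ j, (if t i < t j then w i * w j else 0)
      = ∑ i, ∑ j, ((if i = j then w i * w j else 0) + (if t i < t j then w i * w j else 0) +
          (if t j < t i then w i * w j else 0)) := by
        simp only [sum_add_distrib, sum_ite_eq, Finset.mem_univ, if_true, sq]
        rw [← swap]
        ring
    _ ≤ ∑ i, ∑ j, w i * w j := by
        refine sum_le_sum fun i _ => sum_le_sum fun j _ => ?_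
        have := mul_nonneg (hw i) (hw j)
        split_ifs with hij <;> (try subst hij) <;> linarith
    _ = (∑ i, w i) ^ 2 := by rw [sq, sum_mul_sum]

theorem sub_le_sum_of_Ioc_subset_biUnion_Icc {ι : Type*} (s : Finset ι) {l r : ι → ℝ}
    (hlr : ∀ j ∈ s, l j ≤ r j) {p q : ℝ} (hcover : Ioc p q ⊆ ⋃ j ∈ s, Icc (l j) (r j)) :
    q - p ≤ ∑ j ∈ s, (r j - l j) := by
  have hvol := (MeasureTheory.measure_mono (μ := MeasureTheory.volume) hcover).trans
    (MeasureTheory.measure_biUnion_finset_le s _)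
  simp only [Real.volume_Ioc, Real.volume_Icc] at hvol
  rw [← ENNReal.ofReal_sum_of_nonneg fun j hj => sub_nonneg.2 (hlr j hj)] at hvol
  exact (ENNReal.ofReal_le_ofReal_iff (sum_nonneg fun j hj => sub_nonneg.2 (hlr j hj))).1 hvol

theorem add_mul_sum_le_of_isPreconnected_iUnion_Icc {ι : Type*} [Fintype ι] (a w : ι → ℝ)
    {h : ℝ} (hw : ∀ i, 0 ≤ w i) (hh : 0 ≤ h)
    (hconn : IsPreconnected (⋃ i, Icc (a i - w i * h) (a i + w i * h))) (k : ι) :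
    (a k + w k * h) * ∑ i, w i ≤ ∑ i, w i * a i + (∑ i, w i) ^ 2 * h := by
  set t : ι → ℝ := fun i => a i + w i * h
  have gap : ∀ i, t k - t i ≤ 2 * h * ∑ j ∈ univ.filter (fun j => t i < t j), w j := by
    intro i
    rcases le_or_gt (t k) (t i) with hki | hik
    · have : 0 ≤ 2 * h * ∑ j ∈ univ.filter (fun j => t i < t j), w j :=
        mul_nonneg (by positivity) (sum_nonneg fun j _ => hw j)
      linarith
    have mem_union : ∀ j, t j ∈ ⋃ i, Icc (a i - w i * h) (a i + w i * h) := fun j =>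
      mem_iUnion_of_mem j ⟨by nlinarith [hw j], le_rfl⟩
    have hcover : Ioc (t i) (t k) ⊆
        ⋃ j ∈ univ.filter (fun j => t i < t j), Icc (a j - w j * h) (t j) := by
      intro s hs
      obtain ⟨j, hj⟩ := mem_iUnion.1
        (hconn.Icc_subset (mem_union i) (mem_union k) (Ioc_subset_Icc_self hs))
      exact mem_biUnion (mem_filter.2 ⟨mem_univ j, hs.1.trans_le hj.2⟩) hj
    calc t k - t i ≤ ∑ j ∈ univ.filter (fun j => t i < t j), (t j - (a j - w j * h)) :=
          sub_le_sum_of_Ioc_subset_biUnion_Icc _ (fun j _ => by nlinarith [hw j]) hcover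
      _ = 2 * h * ∑ j ∈ univ.filter (fun j => t i < t j), w j := by
          rw [mul_sum]
          exact sum_congr rfl fun j _ => by ring
  have weighted_gap : ∀ i,
      w i * (t k - a i) ≤ h * (w i ^ 2 + 2 * ∑ j, if t i < t j then w i * w j else 0) := by
    intro i
    rw [← sum_filter, ← mul_sum]
    nlinarith [mul_le_mul_of_nonneg_left (gap i) (hw i)]
  calc t k * ∑ i, w i = ∑ i, w i * a i + ∑ i, w i * (t k - a i) := by
        simp only [mul_sub, sum_sub_distrib, ← sum_mul]
        ring
    _ ≤ ∑ i, w i * a i + ∑ i, h * (w i ^ 2 + 2 * ∑ j, if t i < t j then w i * w j else 0) :=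
        add_le_add le_rfl (sum_le_sum fun i _ => weighted_gap i)
    _ = ∑ i, w i * a i +
          h * (∑ i, w i ^ 2 + 2 * ∑ i, ∑ j, if t i < t j then w i * w j else 0) := by
        rw [← mul_sum, sum_add_distrib, ← mul_sum]
    _ ≤ ∑ i, w i * a i + h * (∑ i, w i) ^ 2 := by
        gcongr
        exact sum_sq_add_two_mul_sum_ite_lt_le_sq_sum w t hw
    _ = ∑ i, w i * a i + (∑ i, w i) ^ 2 * h := by ring

end

theorem inner_mem_Icc_of_mem_vadd_smul {E : Type*} [NormedAddCommGroup E] [InnerProductSpace ℝ E]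
    {K : Set E} (hsym : K = -K) {u : E} {h : ℝ} (hK : ∀ z ∈ K, ⟪u, z⟫ ≤ h) {x y : E} {τ : ℝ}
    (hτ : 0 ≤ τ) (hy : y ∈ x +ᵥ τ • K) :
    ⟪u, y⟫ ∈ Icc (⟪u, x⟫ - τ * h) (⟪u, x⟫ + τ * h) := by
  obtain ⟨_, ⟨z, hz, rfl⟩, rfl⟩ := hy
  dsimp only
  have hle := hK z hz
  have hge := hK (-z) (by rw [hsym]; simpa using hz)
  rw [inner_neg_right] at hge
  rw [vadd_eq_add, inner_add_right, real_inner_smul_right]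
  constructor <;> nlinarith

theorem NonSeparableFamily.isPreconnected_iUnion_Icc {d n : ℕ}
    {F : Fin n → Set (EuclideanSpace ℝ (Fin d))} (hF : NonSeparableFamily F)
    {u : EuclideanSpace ℝ (Fin d)} (hu : u ≠ 0) {l r : Fin n → ℝ}
    (hproj : ∀ i, ∀ y ∈ F i, ⟪u, y⟫ ∈ Icc (l i) (r i)) :
    IsPreconnected (⋃ i, Icc (l i) (r i)) := by
  refine isPreconnected_iff_ordConnected.2 ⟨fun p hp q hq s hs => ?_⟩
  by_contra hgap
  obtain ⟨i, hpi⟩ := mem_iUnion.1 hp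
  obtain ⟨k, hqk⟩ := mem_iUnion.1 hq
  have hside : ∀ j, r j < s ∨ s < l j := fun j => by
    by_contra! hj
    exact hgap (mem_iUnion_of_mem j hj.symm)
  refine hF ⟨Finset.univ.filter (fun j => r j < s), u, s, ⟨i, ?_⟩, fun huniv => ?_, hu,
    fun j hj y hy => ?_, fun j hj y hy => ?_⟩
  · refine Finset.mem_filter.2 ⟨Finset.mem_univ i, (hside i).resolve_right ?_⟩
    exact fun hsl => (hpi.1.trans hs.1).not_gt hsl
  · have := (Finset.mem_filter.1 (huniv ▸ Finset.mem_univ k)).2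
    exact (hs.2.trans hqk.2).not_gt this
  · exact (hproj j y hy).2.trans_lt (Finset.mem_filter.1 hj).2
  · have hsl := (hside j).resolve_left fun hrs => hj (Finset.mem_filter.2 ⟨Finset.mem_univ j, hrs⟩)
    exact hsl.trans_le (hproj j y hy).1

theorem inner_mul_sum_le_of_nonSeparableFamily {d n : ℕ} {K : Set (EuclideanSpace ℝ (Fin d))}
    (hsym : K = -K) {x : Fin n → EuclideanSpace ℝ (Fin d)} {τ : Fin n → ℝ} (hτ : ∀ i, 0 < τ i)
    (hns : NonSeparableFamily (fun i => x i +ᵥ τ i • K)) {u : EuclideanSpace ℝ (Fin d)}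
    (hu : u ≠ 0) {h : ℝ} (hK : ∀ z ∈ K, ⟪u, z⟫ ≤ h) {y : EuclideanSpace ℝ (Fin d)}
    (hy : y ∈ ⋃ i, x i +ᵥ τ i • K) :
    ⟪u, y⟫ * ∑ i, τ i ≤ ⟪u, ∑ i, τ i • x i⟫ + (∑ i, τ i) ^ 2 * h := by
  obtain ⟨j, hyj⟩ := mem_iUnion.1 hy
  have hproj : ∀ i, ∀ y ∈ x i +ᵥ τ i • K, ⟪u, y⟫ ∈ Icc (⟪u, x i⟫ - τ i * h) (⟪u, x i⟫ + τ i * h) :=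
    fun i _ hy => inner_mem_Icc_of_mem_vadd_smul hsym hK (hτ i).le hy
  have hyj_proj := hproj j y hyj
  have hh : 0 ≤ h := by
    have := hyj_proj.1.trans hyj_proj.2
    nlinarith [hτ j]
  have hGG := add_mul_sum_le_of_isPreconnected_iUnion_Icc (fun i => ⟪u, x i⟫) τ
    (fun i => (hτ i).le) hh (hns.isPreconnected_iUnion_Icc hu hproj) j
  have hT : 0 ≤ ∑ i, τ i := Finset.sum_nonneg fun i _ => (hτ i).le
  simp only [inner_sum, real_inner_smul_right]
  nlinarith [mul_le_mul_of_nonneg_right hyj_proj.2 hT]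

theorem mem_of_forall_inner_le {E : Type*} [NormedAddCommGroup E] [InnerProductSpace ℝ E]
    [CompleteSpace E] {K : Set E} (hconv : Convex ℝ K) (hclosed : IsClosed K) (hne : K.Nonempty)
    {w : E} (hw : ∀ u ≠ 0, ∀ h, (∀ z ∈ K, ⟪u, z⟫ ≤ h) → ⟪u, w⟫ ≤ h) : w ∈ K := by
  by_contra hwK
  obtain ⟨f, c, hfK, hcw⟩ := geometric_hahn_banach_closed_point hconv hclosed hwK
  set u := (InnerProductSpace.toDual ℝ E).symm f
  have hinner : ∀ v, ⟪u, v⟫ = f v := fun v => InnerProductSpace.toDual_symm_apply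
  have hu : u ≠ 0 := by
    rintro hu0
    obtain ⟨z, hz⟩ := hne
    have := (hfK z hz).trans hcw
    rw [← hinner, ← hinner, hu0, inner_zero_left, inner_zero_left] at this
    exact lt_irrefl 0 this
  have := hw u hu c fun z hz => (hinner z).trans_le (hfK z hz).le
  rw [hinner] at this
  exact this.not_gt hcw

theorem stmt_3_general (d n : ℕ)
    (K₀ : Set (EuclideanSpace ℝ (Fin d)))
    (hKconv : Convex ℝ K₀) (hKcpt : IsCompact K₀)
    (hKsym : K₀ = -K₀)
    (x : Fin n → EuclideanSpace ℝ (Fin d)) (τ : Fin n → ℝ) (hτ : ∀ i, 0 < τ i)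
    (hns : NonSeparableFamily (fun i => x i +ᵥ τ i • K₀)) :
    (∃ t : EuclideanSpace ℝ (Fin d),
        (⋃ i, x i +ᵥ τ i • K₀) ⊆ t +ᵥ (∑ i, τ i) • K₀) ∧
    (⋃ i, x i +ᵥ τ i • K₀) ⊆
      ((∑ i, τ i)⁻¹ • ∑ i, τ i • x i) +ᵥ (∑ i, τ i) • K₀ := by
  have main : (⋃ i, x i +ᵥ τ i • K₀) ⊆
      ((∑ i, τ i)⁻¹ • ∑ i, τ i • x i) +ᵥ (∑ i, τ i) • K₀ := by
    intro y hy
    obtain ⟨j, _, ⟨z, hz, -⟩, -⟩ := mem_iUnion.1 hy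
    have hT : 0 < ∑ i, τ i := Finset.sum_pos (fun i _ => hτ i) ⟨j, Finset.mem_univ j⟩
    rw [mem_vadd_set_iff_neg_vadd_mem, vadd_eq_add, mem_smul_set_iff_inv_smul_mem₀ hT.ne']
    refine mem_of_forall_inner_le hKconv hKcpt.isClosed ⟨z, hz⟩ fun u hu h hK => ?_
    have hbound := inner_mul_sum_le_of_nonSeparableFamily hKsym hτ hns hu hK hy
    rw [real_inner_smul_right, inner_add_right, inner_neg_right, real_inner_smul_right,
      inv_mul_le_iff₀ hT, neg_add_le_iff_le_add, ← div_eq_inv_mul, div_add' _ _ _ hT.ne',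
      le_div_iff₀ hT]
    nlinarith
  exact ⟨⟨_, main⟩, main⟩

/-- **Bezdek–Lángi.** The Goodman–Goodman theorem for `o`-symmetric convex bodies:
if `𝒦 = {xᵢ + τᵢ K₀}` is a non-separable family of positive homothets of an
`o`-symmetric convex body `K₀` in `ℝ^d` (`d ≥ 2`, `n ≥ 2`), then a translate of
`(∑ τᵢ) K₀` covers `⋃ 𝒦`; indeed `⋃ 𝒦 ⊆ x + (∑ τᵢ) K₀` where
`x = (∑ τᵢ xᵢ)/(∑ τᵢ)`. -/
theorem stmt_3 (d n : ℕ) (hd : 2 ≤ d) (hn : 2 ≤ n)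
    (K₀ : Set (EuclideanSpace ℝ (Fin d)))
    (hKconv : Convex ℝ K₀) (hKcpt : IsCompact K₀) (hKint : (interior K₀).Nonempty)
    (hKsym : K₀ = -K₀)
    (x : Fin n → EuclideanSpace ℝ (Fin d)) (τ : Fin n → ℝ) (hτ : ∀ i, 0 < τ i)
    (hns : NonSeparableFamily (fun i => x i +ᵥ τ i • K₀)) :
    (∃ t : EuclideanSpace ℝ (Fin d),
        (⋃ i, x i +ᵥ τ i • K₀) ⊆ t +ᵥ (∑ i, τ i) • K₀) ∧
    (⋃ i, x i +ᵥ τ i • K₀) ⊆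
      ((∑ i, τ i)⁻¹ • ∑ i, τ i • x i) +ᵥ (∑ i, τ i) • K₀ :=
  stmt_3_general d n K₀ hKconv hKcpt hKsym x τ hτ hns
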